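/- Let B be maximally monotone and μ_B-strongly monotone (μ_B ≥ 0), A maximally monotone, and C β-cocoercive and μ_C-strongly monotone on H. Let η ∈ (0,1) and γ_k ∈ (0, 2(1−η)β). With the accelerated iteration x_B^{k+1} = J_{γ_k B}(x_A^k + γ_k u_B^k), u_B^{k+1} = (1/γ_k)(x_A^k + γ_k u_B^k − x_B^{k+1}), x_A^{k+1} = J_{γ_{k+1}A}(x_B^{k+1} − γ_{k+1}u_B^{k+1} − γ_{k+1}Cx_B^{k+1}), and any zero x* of A+B+C with u_B* ∈ Bx* satisfying the fixed-point relations, the following holds for all k: (1 + 2γ_k μ_B)‖x_B^{k+1} − x*‖² + γ_k²‖u_B^{k+1} − u_B*‖² + (1 − γ_k/(2(1−η)β))‖x_A^k − x_B^k‖² ≤ (1 − 2γ_k μ_C η)‖x_B^k − x*‖² + γ_k²‖u_B^k − u_B*‖². -/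
import Mathlib


open scoped InnerProductSpace

private lemma expand_sq {H : Type*} [NormedAddCommGroup H] [InnerProductSpace ℝ H]
    (g : ℝ) (x y : H) :
    ‖x + g • y‖ ^ 2 = ‖x‖ ^ 2 + 2 * g * ⟪x, y⟫_ℝ + g ^ 2 * ‖y‖ ^ 2 := by
  rw [norm_add_sq_real, real_inner_smul_right, norm_smul, mul_pow, Real.norm_eq_abs, sq_abs]
  ring


/-- One-step inequality for the accelerated three-operator splitting when `B` is
`μ_B`-strongly monotone and `C` is `β`-cocoercive and `μ_C`-strongly monotone. -/
theorem accelerated_one_step_inequality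
    {H : Type*} [NormedAddCommGroup H] [InnerProductSpace ℝ H] [CompleteSpace H]
    (A B : H → Set H) (C : H → H) (β μB μC η : ℝ)
    (hβ : 0 < β) (hμB : 0 ≤ μB) (hμC : 0 ≤ μC) (hη : η ∈ Set.Ioo (0 : ℝ) 1)
    (hAmono : ∀ x y u v, u ∈ A x → v ∈ A y → 0 ≤ ⟪u - v, x - y⟫_ℝ)
    (hBstrong : ∀ x y u v, u ∈ B x → v ∈ B y → μB * ‖x - y‖ ^ 2 ≤ ⟪u - v, x - y⟫_ℝ)
    (hCcoco : ∀ x y, β * ‖C x - C y‖ ^ 2 ≤ ⟪C x - C y, x - y⟫_ℝ)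
    (hCstrong : ∀ x y, μC * ‖x - y‖ ^ 2 ≤ ⟪C x - C y, x - y⟫_ℝ)
    (γ : ℕ → ℝ) (hγ : ∀ k, γ k ∈ Set.Ioo 0 (2 * (1 - η) * β))
    (xB xA uB uA : ℕ → H)
    (huB : ∀ k, uB k ∈ B (xB k))
    (huA : ∀ k, uA k ∈ A (xA k))
    -- `x_B^{k+1} = J_{γ_k B}(x_A^k + γ_k u_B^k)` and
    -- `u_B^{k+1} = γ_k⁻¹ (x_A^k + γ_k u_B^k - x_B^{k+1})`:
    (hrecB : ∀ k, uB (k + 1) = (γ k)⁻¹ • (xA k + γ k • uB k - xB (k + 1)))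
    -- `x_A^k = J_{γ_k A}(x_B^k - γ_k u_B^k - γ_k C x_B^k)`:
    (hrecA : ∀ k, xA k = xB k - γ k • uB k - γ k • C (xB k) - γ k • uA k)
    (xs uBs uAs : H)
    (huBs : uBs ∈ B xs) (huAs : uAs ∈ A xs)
    (hzero : uAs + uBs + C xs = 0) :
    ∀ k : ℕ,
      (1 + 2 * γ k * μB) * ‖xB (k + 1) - xs‖ ^ 2
        + (γ k) ^ 2 * ‖uB (k + 1) - uBs‖ ^ 2
        + (1 - γ k / (2 * (1 - η) * β)) * ‖xA k - xB k‖ ^ 2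
      ≤ (1 - 2 * γ k * μC * η) * ‖xB k - xs‖ ^ 2
        + (γ k) ^ 2 * ‖uB k - uBs‖ ^ 2 := by
  intro k
  obtain ⟨hg0, hg2⟩ := hγ k
  have hη0 : 0 < η := hη.1
  have hη1 : η < 1 := hη.2
  have hb : 0 < (1 - η) * β := mul_pos (by linarith) hβ
  set g : ℝ := γ k with hgdef
  -- vectors
  set d : H := xB k - xs with hd
  set e : H := xA k - xB k with he
  set c : H := C (xB k) - C xs with hc
  set s : H := uA k - uAs with hs
  set w : H := uB k - uBs with hw
  set r : H := uB (k + 1) - uBs with hr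
  set p : H := xB (k + 1) - xs with hp
  set t : H := c + s with ht
  -- vector identities
  have hz : uBs + C xs + uAs = 0 := by rw [← hzero]; abel
  have hve : g • (w + c + s) = -e := by
    rw [hw, hc, hs, he, hrecA k, ← hgdef]
    linear_combination (norm := module) (-g : ℝ) • hz
  have hqB : g • uB (k + 1) = xA k + g • uB k - xB (k + 1) := by
    rw [hrecB k, ← hgdef, smul_smul, mul_inv_cancel₀ hg0.ne', one_smul]
  have hid1 : d - g • t = p + g • r := by
    rw [ht, hd, hp, hr, hc, hs]
    have hv := hve
    rw [hw, hc, hs, he] at hv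
    linear_combination (norm := module) (-1 : ℝ) • hqB + (-1 : ℝ) • hv
  have hid2 : g • w = -(e + g • t) := by
    rw [ht]
    linear_combination (norm := module) hve
  -- scalar identities
  have A1 : ‖d‖ ^ 2 - 2 * g * ⟪d, t⟫_ℝ + g ^ 2 * ‖t‖ ^ 2
      = ‖p‖ ^ 2 + 2 * g * ⟪p, r⟫_ℝ + g ^ 2 * ‖r‖ ^ 2 := by
    have h1 : ‖d + (-g) • t‖ ^ 2 = ‖d‖ ^ 2 + 2 * (-g) * ⟪d, t⟫_ℝ + (-g) ^ 2 * ‖t‖ ^ 2 :=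
      expand_sq (-g) d t
    have h2 : ‖p + g • r‖ ^ 2 = ‖p‖ ^ 2 + 2 * g * ⟪p, r⟫_ℝ + g ^ 2 * ‖r‖ ^ 2 :=
      expand_sq g p r
    have h3 : d + (-g) • t = p + g • r := by rw [neg_smul, ← sub_eq_add_neg]; exact hid1
    rw [h3] at h1
    rw [h2] at h1
    linarith [h1]
  have A2 : g ^ 2 * ‖w‖ ^ 2 = ‖e‖ ^ 2 + 2 * g * ⟪e, t⟫_ℝ + g ^ 2 * ‖t‖ ^ 2 := by
    have h1 : ‖g • w‖ ^ 2 = g ^ 2 * ‖w‖ ^ 2 := by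
      rw [norm_smul, mul_pow, Real.norm_eq_abs, sq_abs]
    have h2 : ‖g • w‖ ^ 2 = ‖e + g • t‖ ^ 2 := by rw [hid2, norm_neg]
    have h3 : ‖e + g • t‖ ^ 2 = ‖e‖ ^ 2 + 2 * g * ⟪e, t⟫_ℝ + g ^ 2 * ‖t‖ ^ 2 := expand_sq g e t
    rw [h2, h3] at h1
    linarith [h1]
  have hdt : ⟪d, t⟫_ℝ = ⟪c, d⟫_ℝ + ⟪s, d⟫_ℝ := by
    rw [ht, inner_add_right, real_inner_comm d c, real_inner_comm d s]
  have het : ⟪e, t⟫_ℝ = ⟪c, e⟫_ℝ + ⟪s, e⟫_ℝ := by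
    rw [ht, inner_add_right, real_inner_comm e c, real_inner_comm e s]
  -- monotonicity facts
  have I1 : μB * ‖p‖ ^ 2 ≤ ⟪r, p⟫_ℝ :=
    hBstrong (xB (k + 1)) xs (uB (k + 1)) uBs (huB (k + 1)) huBs
  have hde : xA k - xs = d + e := by rw [hd, he]; abel
  have I2 : 0 ≤ ⟪s, d⟫_ℝ + ⟪s, e⟫_ℝ := by
    have := hAmono (xA k) xs (uA k) uAs (huA k) huAs
    rw [← hs, hde, inner_add_right] at this
    linarith
  have I3 : β * ‖c‖ ^ 2 ≤ ⟪c, d⟫_ℝ := hCcoco (xB k) xs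
  have I4 : μC * ‖d‖ ^ 2 ≤ ⟪c, d⟫_ℝ := hCstrong (xB k) xs
  -- Young's inequality square
  have E4 : (0 : ℝ) ≤ ‖e‖ ^ 2 + 2 * (2 * ((1 - η) * β)) * ⟪e, c⟫_ℝ
      + (2 * ((1 - η) * β)) ^ 2 * ‖c‖ ^ 2 := by
    have := expand_sq (2 * ((1 - η) * β)) e c
    nlinarith [sq_nonneg ‖e + (2 * ((1 - η) * β)) • c‖]
  have hce : ⟪e, c⟫_ℝ = ⟪c, e⟫_ℝ := (real_inner_comm e c).symm
  -- delta
  set δ : ℝ := g / (2 * (1 - η) * β) with hδdef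
  have h2b : (0 : ℝ) < 2 * (1 - η) * β :=
    mul_pos (mul_pos (by norm_num) (by linarith)) hβ
  have hδ : δ * (2 * ((1 - η) * β)) = g := by
    rw [hδdef, div_mul_eq_mul_div, mul_div_assoc,
      show 2 * ((1 - η) * β) = 2 * (1 - η) * β from by ring, div_self h2b.ne', mul_one]
  have hδ0 : 0 ≤ δ := div_nonneg hg0.le h2b.le
  -- multiplied inequalities
  have J1 : 2 * g * (μB * ‖p‖ ^ 2) ≤ 2 * g * ⟪r, p⟫_ℝ :=
    mul_le_mul_of_nonneg_left I1 (by linarith)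
  have J2 : 0 ≤ 2 * g * (⟪s, d⟫_ℝ + ⟪s, e⟫_ℝ) := by positivity
  have J3 : 2 * g * (η * (μC * ‖d‖ ^ 2) + (1 - η) * (β * ‖c‖ ^ 2)) ≤ 2 * g * ⟪c, d⟫_ℝ := by
    have h1 : η * (μC * ‖d‖ ^ 2) ≤ η * ⟪c, d⟫_ℝ := mul_le_mul_of_nonneg_left I4 hη0.le
    have h2 : (1 - η) * (β * ‖c‖ ^ 2) ≤ (1 - η) * ⟪c, d⟫_ℝ :=
      mul_le_mul_of_nonneg_left I3 (by linarith)
    have h3 := add_le_add h1 h2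
    have h4 : η * ⟪c, d⟫_ℝ + (1 - η) * ⟪c, d⟫_ℝ = ⟪c, d⟫_ℝ := by ring
    rw [h4] at h3
    exact mul_le_mul_of_nonneg_left h3 (by linarith)
  have J4 : -(2 * g * ((1 - η) * β * ‖c‖ ^ 2)) - δ * ‖e‖ ^ 2 ≤ 2 * g * ⟪c, e⟫_ℝ := by
    have h1 : 0 ≤ δ * (‖e‖ ^ 2 + 2 * (2 * ((1 - η) * β)) * ⟪e, c⟫_ℝ
        + (2 * ((1 - η) * β)) ^ 2 * ‖c‖ ^ 2) := mul_nonneg hδ0 E4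
    have key : δ * (‖e‖ ^ 2 + 2 * (2 * ((1 - η) * β)) * ⟪e, c⟫_ℝ
        + (2 * ((1 - η) * β)) ^ 2 * ‖c‖ ^ 2)
        = δ * ‖e‖ ^ 2 + 2 * g * ⟪c, e⟫_ℝ + 2 * g * ((1 - η) * β * ‖c‖ ^ 2) := by
      linear_combination (2 * ⟪c, e⟫_ℝ + 2 * ((1 - η) * β) * ‖c‖ ^ 2) * hδ
        + (δ * (4 * ((1 - η) * β))) * hce
    rw [key] at h1
    linarith
  have hpr : ⟪p, r⟫_ℝ = ⟪r, p⟫_ℝ := real_inner_comm r p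
  -- conclude
  rw [hdt, hpr] at A1
  rw [het] at A2
  linarith [A1, A2, J1, J2, J3, J4]
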